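/- arXiv:1902.01760 — 2 statements merged into one kernel-verified Lean document; each statement's English description precedes it below -/
import Mathlib

section
/- Let I = [a,b] ⊂ (0,2) and h(α) := ∫_{ℝ^d \ {0}} (1 - cos(y₁)) |y|^{-d-α} dy for α ∈ I. Then h is finite on I, inf_{α∈I} h(α) > 0, and h is Lipschitz continuous on I: there is C₁ > 0 with |h(α) - h(α̃)| ≤ C₁|α - α̃| for all α, α̃ ∈ I. Consequently c(α) := 1/h(α) is also Lipschitz continuous on I. -/
/-!
Since `1 - cos t ≤ 2 min(1, t²)` and `|y₁| ≤ |y|`, the integrand is dominated by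
`2 min(1, |y|²) |y|^{-d-α}`, whose integral reduces in polar coordinates to those of `r^{1-α}`
on `(0, 1]` and of `r^{-1-α}` on `(1, ∞)`, both finite for `0 < α < 2`.

For fixed `y ≠ 0` the integrand is a nonnegative multiple of `(|y|⁻¹)^α`, hence convex in `α`;
integrating, `h` is convex on `(0, 2)`. A convex function on an open interval is locally
Lipschitz, hence Lipschitz and continuous on the compact `[a, b]`. The integrand is positive
on the open set `{0 < y₁ < 2π}`, so `h > 0` and its minimum `m` on `[a, b]` is positive;
then `|1/h(α) - 1/h(α')| ≤ |h(α) - h(α')| / m²`.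
-/

open MeasureTheory

noncomputable def stableH (d : ℕ) (hd : 0 < d) (α : ℝ) : ℝ :=
  ∫ y in ({0}ᶜ : Set (EuclideanSpace ℝ (Fin d))),
    (1 - Real.cos (y ⟨0, hd⟩)) * ‖y‖ ^ (-(d : ℝ) - α)

open Set Module
open scoped NNReal

lemma Real.one_sub_cos_le_two_mul_min_one_sq (t : ℝ) : 1 - Real.cos t ≤ 2 * min 1 (t ^ 2) := by
  rw [mul_min_of_nonneg _ _ zero_le_two]
  exact le_min (by linarith [Real.neg_one_le_cos t])
    (by nlinarith [Real.one_sub_sq_div_two_le_cos (x := t), sq_nonneg t])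

section LevyIntegrability

variable {E : Type*} [NormedAddCommGroup E] [NormedSpace ℝ E] [FiniteDimensional ℝ E]
  [Nontrivial E] [MeasurableSpace E] [BorelSpace E] (μ : Measure E) [μ.IsAddHaarMeasure]

lemma integrable_min_one_sq_mul_norm_rpow {γ : ℝ} (hγ₀ : 0 < γ) (hγ₂ : γ < 2) :
    Integrable (fun x : E => min 1 (‖x‖ ^ 2) * ‖x‖ ^ (-(finrank ℝ E : ℝ) - γ)) μ := by
  set n := finrank ℝ E
  have hn : 1 ≤ n := finrank_pos
  have radial {r : ℝ} (hr : 0 < r) (k : ℕ) :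
      r ^ (n - 1) * (r ^ k * r ^ (-(n : ℝ) - γ)) = r ^ ((k : ℝ) - 1 - γ) := by
    rw [← Real.rpow_natCast r k, ← Real.rpow_natCast r (n - 1), ← Real.rpow_add hr,
      ← Real.rpow_add hr, Nat.cast_sub hn]
    ring_nf
  rw [integrable_fun_norm_addHaar μ (f := fun r => min 1 (r ^ 2) * r ^ (-(n : ℝ) - γ)),
    ← Ioc_union_Ioi_eq_Ioi zero_le_one]
  refine IntegrableOn.union ?_ ?_
  · refine ((intervalIntegral.intervalIntegrable_rpow' (a := 0) (b := 1)
      (show -1 < 1 - γ by linarith)).1).congr_fun (fun r ⟨hr₀, hr₁⟩ => ?_) measurableSet_Ioc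
    rw [smul_eq_mul, min_eq_right (pow_le_one₀ hr₀.le hr₁), radial hr₀]
    norm_num
  · refine (integrableOn_Ioi_rpow_of_lt (show -1 - γ < -1 by linarith) zero_lt_one).congr_fun
      (fun r (hr : 1 < r) => ?_) measurableSet_Ioi
    simpa [min_eq_left (one_le_pow₀ hr.le)] using (radial (zero_lt_one.trans hr) 0).symm

end LevyIntegrability

lemma LipschitzOnWith.inv_of_le {X : Type*} [PseudoMetricSpace X] {f : X → ℝ} {K m : ℝ≥0}
    {s : Set X} (hm : 0 < m) (hf : LipschitzOnWith K f s) (hfm : ∀ x ∈ s, (m : ℝ) ≤ f x) :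
    LipschitzOnWith (K / m ^ 2) (fun x => (f x)⁻¹) s := by
  refine LipschitzOnWith.of_dist_le_mul fun x hx y hy => ?_
  have hm' : (0 : ℝ) < m := hm
  have hfx := hm'.trans_le (hfm x hx)
  have hfy := hm'.trans_le (hfm y hy)
  rw [dist_inv_inv₀ hfx.ne' hfy.ne', Real.norm_of_nonneg hfx.le, Real.norm_of_nonneg hfy.le]
  calc dist (f x) (f y) / (f x * f y) ≤ K * dist x y / (m * m) :=
        div_le_div₀ (by positivity) (hf.dist_le_mul x hx y hy) (by positivity)
          (mul_le_mul (hfm x hx) (hfm y hy) hm'.le hfx.le)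
    _ = ↑(K / m ^ 2) * dist x y := by push_cast; ring

lemma LipschitzOnWith.exists_pos_abs_sub_le {f : ℝ → ℝ} {K : ℝ≥0} {s : Set ℝ}
    (hf : LipschitzOnWith K f s) : ∃ C > (0 : ℝ), ∀ x ∈ s, ∀ y ∈ s, |f x - f y| ≤ C * |x - y| :=
  ⟨K + 1, by positivity, fun x hx y hy => by
    simpa only [Real.dist_eq] using (hf.dist_le_mul x hx y hy).trans
      (mul_le_mul_of_nonneg_right (by linarith) dist_nonneg)⟩

section Stable

variable {d : ℕ} (hd : 0 < d)

noncomputable def stableIntegrand (α : ℝ) (y : EuclideanSpace ℝ (Fin d)) : ℝ :=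
  (1 - Real.cos (y ⟨0, hd⟩)) * ‖y‖ ^ (-(d : ℝ) - α)

lemma stableH_eq_setIntegral (α : ℝ) :
    stableH d hd α = ∫ y in ({0}ᶜ : Set (EuclideanSpace ℝ (Fin d))), stableIntegrand hd α y :=
  rfl

lemma stableIntegrand_nonneg (α : ℝ) (y : EuclideanSpace ℝ (Fin d)) :
    0 ≤ stableIntegrand hd α y :=
  mul_nonneg (sub_nonneg.2 (Real.cos_le_one _)) (Real.rpow_nonneg (norm_nonneg _) _)

lemma stableIntegrand_le (α : ℝ) (y : EuclideanSpace ℝ (Fin d)) :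
    stableIntegrand hd α y ≤ 2 * (min 1 (‖y‖ ^ 2) * ‖y‖ ^ (-(d : ℝ) - α)) := by
  have hcoord : |y ⟨0, hd⟩| ≤ ‖y‖ := by simpa using PiLp.norm_apply_le y ⟨0, hd⟩
  rw [← mul_assoc]
  refine mul_le_mul_of_nonneg_right ?_ (Real.rpow_nonneg (norm_nonneg _) _)
  calc 1 - Real.cos (y ⟨0, hd⟩) ≤ 2 * min 1 (y ⟨0, hd⟩ ^ 2) :=
        Real.one_sub_cos_le_two_mul_min_one_sq _
    _ ≤ 2 * min 1 (‖y‖ ^ 2) := by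
        gcongr 2 * min 1 ?_
        exact sq_le_sq.2 (hcoord.trans (le_abs_self _))

lemma integrable_stableIntegrand {α : ℝ} (hα₀ : 0 < α) (hα₂ : α < 2) :
    Integrable (stableIntegrand hd α) := by
  have : Nonempty (Fin d) := ⟨⟨0, hd⟩⟩
  have hmaj := (integrable_min_one_sq_mul_norm_rpow (volume : Measure (EuclideanSpace ℝ (Fin d)))
    hα₀ hα₂).const_mul 2
  rw [finrank_euclideanSpace_fin] at hmaj
  refine hmaj.mono' (by unfold stableIntegrand; fun_prop : Measurable _).aestronglyMeasurable
    (ae_of_all _ fun y => ?_)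
  rw [Real.norm_of_nonneg (stableIntegrand_nonneg hd α y)]
  exact stableIntegrand_le hd α y

lemma stableH_pos {α : ℝ} (hα₀ : 0 < α) (hα₂ : α < 2) : 0 < stableH d hd α := by
  rw [stableH_eq_setIntegral, setIntegral_pos_iff_support_of_nonneg_ae
    (ae_of_all _ (stableIntegrand_nonneg hd α))
    (integrable_stableIntegrand hd hα₀ hα₂).integrableOn]
  set U := (fun y : EuclideanSpace ℝ (Fin d) => y ⟨0, hd⟩) ⁻¹' Ioo 0 (2 * Real.pi)
  have hU : IsOpen U := isOpen_Ioo.preimage (by fun_prop)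
  have hUne : U.Nonempty :=
    ⟨EuclideanSpace.single ⟨0, hd⟩ Real.pi, by simp [U, Real.pi_pos]⟩
  have hUsub : U ⊆ Function.support (stableIntegrand hd α) ∩ {0}ᶜ := by
    rintro y ⟨hy₀, hy₂⟩
    have hy : y ≠ 0 := by rintro rfl; simp at hy₀
    have hcos : Real.cos (y ⟨0, hd⟩) < 1 := (Real.cos_le_one _).lt_of_ne fun h => hy₀.ne' <|
      (Real.cos_eq_one_iff_of_lt_of_lt (by linarith [Real.pi_pos]) hy₂).1 h
    exact ⟨(mul_pos (sub_pos.2 hcos) (Real.rpow_pos_of_pos (norm_pos_iff.2 hy) _)).ne', hy⟩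
  exact (hU.measure_pos volume hUne).trans_le (measure_mono hUsub)

lemma convexOn_stableIntegrand (y : EuclideanSpace ℝ (Fin d)) :
    ConvexOn ℝ univ fun α => stableIntegrand hd α y := by
  rcases eq_or_ne y 0 with rfl | hy
  · simpa [stableIntegrand] using convexOn_const (0 : ℝ) convex_univ
  have hr := norm_pos_iff.2 hy
  have hfactor : (fun α => stableIntegrand hd α y) =
      fun α => ((1 - Real.cos (y ⟨0, hd⟩)) * ‖y‖ ^ (-(d : ℝ))) * ‖y‖⁻¹ ^ α := by
    ext α
    rw [stableIntegrand, Real.rpow_sub hr, Real.inv_rpow hr.le, div_eq_mul_inv, mul_assoc]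
  rw [hfactor]
  exact (convexOn_rpow_left (inv_pos.2 hr)).smul
    (mul_nonneg (sub_nonneg.2 (Real.cos_le_one _)) (Real.rpow_nonneg hr.le _))

lemma convexOn_stableH : ConvexOn ℝ (Ioo 0 2) (stableH d hd) := by
  refine ⟨convex_Ioo 0 2, fun α hα β hβ s t hs ht hst => ?_⟩
  have hint {γ : ℝ} (hγ : γ ∈ Ioo (0 : ℝ) 2) :
      IntegrableOn (stableIntegrand hd γ) {0}ᶜ :=
    (integrable_stableIntegrand hd hγ.1 hγ.2).integrableOn
  simp only [smul_eq_mul, stableH_eq_setIntegral]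
  rw [← integral_const_mul, ← integral_const_mul,
    ← integral_add ((hint hα).const_mul s) ((hint hβ).const_mul t)]
  exact integral_mono (hint (convex_Ioo 0 2 hα hβ hs ht hst))
    (((hint hα).const_mul s).add ((hint hβ).const_mul t))
    fun y => (convexOn_stableIntegrand hd y).2 trivial trivial hs ht hst

end Stable

theorem stmt_7 (d : ℕ) (hd : 0 < d) (a b : ℝ)
    (ha : 0 < a) (hab : a ≤ b) (hb : b < 2) :
    (∀ α ∈ Set.Icc a b,
      IntegrableOn
        (fun y : EuclideanSpace ℝ (Fin d) =>
          (1 - Real.cos (y ⟨0, hd⟩)) * ‖y‖ ^ (-(d : ℝ) - α))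
        ({0}ᶜ)) ∧
    (∃ m > (0:ℝ), ∀ α ∈ Set.Icc a b, m ≤ stableH d hd α) ∧
    (∃ C₁ > (0:ℝ), ∀ α ∈ Set.Icc a b, ∀ α' ∈ Set.Icc a b,
      |stableH d hd α - stableH d hd α'| ≤ C₁ * |α - α'|) ∧
    (∃ C₂ > (0:ℝ), ∀ α ∈ Set.Icc a b, ∀ α' ∈ Set.Icc a b,
      |(stableH d hd α)⁻¹ - (stableH d hd α')⁻¹| ≤ C₂ * |α - α'|) := by
  have hsub : Icc a b ⊆ Ioo 0 2 := Icc_subset_Ioo ha hb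
  have hpos {α : ℝ} (hα : α ∈ Icc a b) : 0 < stableH d hd α :=
    stableH_pos hd (hsub hα).1 (hsub hα).2
  have hloc := ((convexOn_stableH hd).locallyLipschitzOn isOpen_Ioo).mono hsub
  obtain ⟨K, hK⟩ := hloc.exists_lipschitzOnWith_of_compact isCompact_Icc
  obtain ⟨α₀, hα₀, hmin⟩ := isCompact_Icc.exists_isMinOn (nonempty_Icc.2 hab) hloc.continuousOn
  refine ⟨fun α hα => (integrable_stableIntegrand hd (hsub hα).1 (hsub hα).2).integrableOn,
    ⟨_, hpos hα₀, fun α hα => hmin hα⟩, hK.exists_pos_abs_sub_le, ?_⟩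
  exact (hK.inv_of_le (m := ⟨_, (hpos hα₀).le⟩) (hpos hα₀) fun α hα => hmin hα)
    |>.exists_pos_abs_sub_le
end

section
/- Let (P_t)_{t≥0} be a strongly continuous contraction semigroup of positive operators on bounded measurable functions, and suppose a bounded measurable function u satisfies ‖P_t u‖_{C_b^κ} ≤ M e^{mt} t^{-β}‖u‖_∞ for all t > 0, with β ∈ [0,1), m ≥ 0, M > 0, κ > 0. Then for every λ > m, the λ-potential R_λ u := ∫_0^∞ e^{-λt} P_t u dt belongs to C_b^κ(ℝ^d) and ‖R_λ u‖_{C_b^κ} ≤ ‖u‖_∞ ((λ-m)^{-1} + (1-β)^{-1})(M+1). -/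
open MeasureTheory

/-- First difference operator `Δ_h f(x) = f(x+h) - f(x)`. -/
def diffOp {d : ℕ} (h : EuclideanSpace ℝ (Fin d)) (f : EuclideanSpace ℝ (Fin d) → ℝ) :
    EuclideanSpace ℝ (Fin d) → ℝ := fun x => f (x + h) - f x

/-!
Both estimates come from one scalar bound: if `|v t| ≤ C e^{mt} t^{-β}` for `t > 0`, then
`|∫₀^∞ e^{-λt} v t dt| ≤ C ∫₀^∞ e^{-(λ-m)t} t^{-β} dt`, and splitting the last integral at `t = 1`
bounds it by `∫₀¹ t^{-β} dt + ∫₁^∞ e^{-(λ-m)t} dt ≤ (1-β)⁻¹ + (λ-m)⁻¹`. The sup bound applies this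
to `v t = P_t u x`; for the Hölder–Zygmund bound, the iterated difference `Δ_h^K` is linear, so it
commutes with the time integral, and the bound applies to `v t = Δ_h^K (P_t u) x`.
-/

open Set Real

section LaplaceBound

variable {β c m lam C : ℝ}

theorem integrableOn_exp_neg_mul_mul_rpow_neg (hc : 0 < c) (hβ : β < 1) :
    IntegrableOn (fun t => exp (-c * t) * t ^ (-β)) (Ioi 0) := by
  refine (integrableOn_rpow_mul_exp_neg_mul_rpow (s := -β) (p := 1) (by linarith) one_pos
    hc).congr_fun (fun t _ => ?_) measurableSet_Ioi
  simp [mul_comm]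

theorem setIntegral_exp_neg_mul_mul_rpow_neg_le (hc : 0 < c) (hβ0 : 0 ≤ β) (hβ1 : β < 1) :
    ∫ t in Ioi 0, exp (-c * t) * t ^ (-β) ≤ c⁻¹ + (1 - β)⁻¹ := by
  have hint := integrableOn_exp_neg_mul_mul_rpow_neg hc hβ1
  rw [← Ioc_union_Ioi_eq_Ioi zero_le_one, setIntegral_union (Ioc_disjoint_Ioi le_rfl)
    measurableSet_Ioi (hint.mono_set Ioc_subset_Ioi_self)
    (hint.mono_set (Ioi_subset_Ioi zero_le_one))]
  have near_zero : ∫ t in Ioc 0 1, exp (-c * t) * t ^ (-β) ≤ (1 - β)⁻¹ := by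
    have hrpow : IntegrableOn (fun t : ℝ => t ^ (-β)) (Ioc 0 1) :=
      (intervalIntegrable_iff_integrableOn_Ioc_of_le zero_le_one).1
        (intervalIntegral.intervalIntegrable_rpow' (by linarith))
    calc ∫ t in Ioc 0 1, exp (-c * t) * t ^ (-β)
        ≤ ∫ t in Ioc 0 1, t ^ (-β) :=
          setIntegral_mono_on (hint.mono_set Ioc_subset_Ioi_self) hrpow measurableSet_Ioc
            fun t ht => mul_le_of_le_one_left (rpow_nonneg ht.1.le _)
              (exp_le_one_iff.2 (by nlinarith [ht.1]))
      _ = (1 - β)⁻¹ := by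
          rw [← intervalIntegral.integral_of_le zero_le_one,
            integral_rpow (Or.inl (by linarith)), one_rpow, zero_rpow (by linarith)]
          ring
  have at_infinity : ∫ t in Ioi 1, exp (-c * t) * t ^ (-β) ≤ c⁻¹ := by
    calc ∫ t in Ioi 1, exp (-c * t) * t ^ (-β)
        ≤ ∫ t in Ioi 1, exp (-c * t) :=
          setIntegral_mono_on (hint.mono_set (Ioi_subset_Ioi zero_le_one))
            (exp_neg_integrableOn_Ioi 1 hc) measurableSet_Ioi
            fun t ht => mul_le_of_le_one_right (exp_pos _).le
              (rpow_le_one_of_one_le_of_nonpos (le_of_lt ht) (by linarith))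
      _ = exp (-c) * c⁻¹ := by
          rw [integral_exp_mul_Ioi (by linarith)]
          field_simp
      _ ≤ c⁻¹ := mul_le_of_le_one_left (inv_nonneg.2 hc.le) (exp_le_one_iff.2 (by linarith))
  linarith

theorem norm_exp_neg_mul_mul_le {t x : ℝ} (hx : |x| ≤ C * (exp (m * t) * t ^ (-β))) :
    ‖exp (-lam * t) * x‖ ≤ C * (exp (-(lam - m) * t) * t ^ (-β)) := by
  rw [norm_mul, norm_of_nonneg (exp_pos _).le, Real.norm_eq_abs]
  calc exp (-lam * t) * |x| ≤ exp (-lam * t) * (C * (exp (m * t) * t ^ (-β))) := by gcongr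
    _ = C * (exp (-(lam - m) * t) * t ^ (-β)) := by
        rw [show -(lam - m) * t = -lam * t + m * t by ring, exp_add]
        ring

theorem integrableOn_exp_neg_mul_mul_of_abs_le {v : ℝ → ℝ} (hlam : m < lam) (hβ : β < 1)
    (hv : AEStronglyMeasurable v (volume.restrict (Ioi 0)))
    (hbound : ∀ t ∈ Ioi 0, |v t| ≤ C * (exp (m * t) * t ^ (-β))) :
    IntegrableOn (fun t => exp (-lam * t) * v t) (Ioi 0) :=
  ((integrableOn_exp_neg_mul_mul_rpow_neg (sub_pos.2 hlam) hβ).const_mul C).mono'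
    ((continuous_exp.comp (continuous_const_mul _)).aestronglyMeasurable.mul hv)
    (ae_restrict_of_forall_mem measurableSet_Ioi fun t ht => norm_exp_neg_mul_mul_le (hbound t ht))

theorem abs_setIntegral_exp_neg_mul_mul_le {v : ℝ → ℝ} (hlam : m < lam) (hβ0 : 0 ≤ β)
    (hβ1 : β < 1) (hbound : ∀ t ∈ Ioi 0, |v t| ≤ C * (exp (m * t) * t ^ (-β))) :
    |∫ t in Ioi 0, exp (-lam * t) * v t| ≤ C * ((lam - m)⁻¹ + (1 - β)⁻¹) := by
  have hC : 0 ≤ C := by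
    have := (abs_nonneg _).trans (hbound 1 (mem_Ioi.2 one_pos))
    simpa [exp_pos] using this
  calc |∫ t in Ioi 0, exp (-lam * t) * v t|
      ≤ ∫ t in Ioi 0, C * (exp (-(lam - m) * t) * t ^ (-β)) :=
        norm_integral_le_of_norm_le
          ((integrableOn_exp_neg_mul_mul_rpow_neg (sub_pos.2 hlam) hβ1).const_mul C)
          (ae_restrict_of_forall_mem measurableSet_Ioi fun t ht =>
            norm_exp_neg_mul_mul_le (hbound t ht))
    _ = C * ∫ t in Ioi 0, exp (-(lam - m) * t) * t ^ (-β) := integral_const_mul _ _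
    _ ≤ C * ((lam - m)⁻¹ + (1 - β)⁻¹) := by
        gcongr
        exact setIntegral_exp_neg_mul_mul_rpow_neg_le (sub_pos.2 hlam) hβ0 hβ1

theorem continuous_setIntegral_exp_neg_mul_mul {X : Type*} [TopologicalSpace X]
    [FirstCountableTopology X] {F : ℝ → X → ℝ} (hlam : m < lam) (hβ : β < 1)
    (hmeas : ∀ x, AEStronglyMeasurable (fun t => F t x) (volume.restrict (Ioi 0)))
    (hcont : ∀ t > 0, Continuous (F t))
    (hbound : ∀ x, ∀ t ∈ Ioi 0, |F t x| ≤ C * (exp (m * t) * t ^ (-β))) :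
    Continuous fun x => ∫ t in Ioi 0, exp (-lam * t) * F t x :=
  continuous_of_dominated
    (fun x => (continuous_exp.comp (continuous_const_mul _)).aestronglyMeasurable.mul (hmeas x))
    (fun x => ae_restrict_of_forall_mem measurableSet_Ioi fun t ht =>
      norm_exp_neg_mul_mul_le (hbound x t ht))
    ((integrableOn_exp_neg_mul_mul_rpow_neg (sub_pos.2 hlam) hβ).const_mul C)
    (ae_restrict_of_forall_mem measurableSet_Ioi fun t ht => continuous_const.mul (hcont t ht))

end LaplaceBound

section IteratedDifference

variable {d : ℕ} (h : EuclideanSpace ℝ (Fin d))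

theorem diffOp_iterate_const_mul (n : ℕ) (a : ℝ) (f : EuclideanSpace ℝ (Fin d) → ℝ) :
    (diffOp h)^[n] (fun x => a * f x) = fun x => a * (diffOp h)^[n] f x := by
  induction n generalizing f with
  | zero => rfl
  | succ n ih =>
    have : diffOp h (fun x => a * f x) = fun x => a * diffOp h f x := by
      funext x
      simp only [diffOp]
      ring
    rw [Function.iterate_succ_apply, Function.iterate_succ_apply, this, ih]

theorem diffOp_iterate_integral {α : Type*} [MeasurableSpace α] {μ : Measure α} (n : ℕ)
    {G : α → EuclideanSpace ℝ (Fin d) → ℝ} (hG : ∀ x, Integrable (fun t => G t x) μ) :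
    (diffOp h)^[n] (fun x => ∫ t, G t x ∂μ) = fun x => ∫ t, (diffOp h)^[n] (G t) x ∂μ := by
  induction n generalizing G with
  | zero => rfl
  | succ n ih =>
    have : diffOp h (fun x => ∫ t, G t x ∂μ) = fun x => ∫ t, diffOp h (G t) x ∂μ := by
      funext x
      exact (integral_sub (hG _) (hG x)).symm
    rw [Function.iterate_succ_apply, this, ih (G := fun t => diffOp h (G t))
      fun x => (hG (x + h)).sub (hG x)]
    rfl

end IteratedDifference

theorem stmt_12_general (d : ℕ)
    (P : ℝ → (EuclideanSpace ℝ (Fin d) → ℝ) → (EuclideanSpace ℝ (Fin d) → ℝ))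
    (u : EuclideanSpace ℝ (Fin d) → ℝ) (M m κ β lam : ℝ)
    (hβ : β ∈ Set.Ico (0:ℝ) 1) (hlam : m < lam)
    (hscont : ∀ x, ContinuousOn (fun t => P t u x) (Set.Ioi 0))
    (hPcont : ∀ t > (0:ℝ), Continuous (P t u))
    (hreg : ∀ t > (0:ℝ),
      (∀ x, |P t u x| ≤ M * Real.exp (m * t) * t ^ (-β) * ⨆ x', |u x'|) ∧
      (∀ (x h : EuclideanSpace ℝ (Fin d)), 0 < ‖h‖ → ‖h‖ ≤ 1 →
        |(diffOp h)^[Nat.floor κ + 1] (P t u) x| ≤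
          M * Real.exp (m * t) * t ^ (-β) * (⨆ x', |u x'|) * ‖h‖ ^ κ)) :
    Continuous (fun x => ∫ t in Set.Ioi (0:ℝ), Real.exp (-lam * t) * P t u x) ∧
    (∀ x, |∫ t in Set.Ioi (0:ℝ), Real.exp (-lam * t) * P t u x| ≤
      (⨆ x', |u x'|) * ((lam - m)⁻¹ + (1 - β)⁻¹) * (M + 1)) ∧
    (∀ (x h : EuclideanSpace ℝ (Fin d)), 0 < ‖h‖ → ‖h‖ ≤ 1 →
      |(diffOp h)^[Nat.floor κ + 1]
          (fun x' => ∫ t in Set.Ioi (0:ℝ), Real.exp (-lam * t) * P t u x') x| ≤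
        (⨆ x', |u x'|) * ((lam - m)⁻¹ + (1 - β)⁻¹) * (M + 1) * ‖h‖ ^ κ) := by
  obtain ⟨hβ0, hβ1⟩ := hβ
  set S := ⨆ x', |u x'|
  set A := (lam - m)⁻¹ + (1 - β)⁻¹
  have hSA : 0 ≤ S * A := by
    have := sub_pos.2 hlam
    have := sub_pos.2 hβ1
    have : 0 ≤ S := Real.iSup_nonneg fun _ => abs_nonneg _
    positivity
  have hmeas x : AEStronglyMeasurable (fun t => P t u x) (volume.restrict (Ioi 0)) :=
    (hscont x).aestronglyMeasurable measurableSet_Ioi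
  have hbound x : ∀ t ∈ Ioi (0:ℝ), |P t u x| ≤ M * S * (exp (m * t) * t ^ (-β)) :=
    fun t ht => ((hreg t ht).1 x).trans_eq (by ring)
  refine ⟨continuous_setIntegral_exp_neg_mul_mul hlam hβ1 hmeas hPcont hbound,
    fun x => ?_, fun x h hh0 hh1 => ?_⟩
  · calc _ ≤ M * S * A := abs_setIntegral_exp_neg_mul_mul_le hlam hβ0 hβ1 (hbound x)
      _ ≤ S * A * (M + 1) := by nlinarith
  · rw [diffOp_iterate_integral h _
      fun x => integrableOn_exp_neg_mul_mul_of_abs_le hlam hβ1 (hmeas x) (hbound x)]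
    simp only [diffOp_iterate_const_mul]
    calc _ ≤ M * S * ‖h‖ ^ κ * A := abs_setIntegral_exp_neg_mul_mul_le hlam hβ0 hβ1
          fun t ht => ((hreg t ht).2 x h hh0 hh1).trans_eq (by ring)
      _ ≤ S * A * (M + 1) * ‖h‖ ^ κ := by nlinarith [rpow_nonneg (norm_nonneg h) κ]

theorem stmt_12 (d : ℕ)
    (P : ℝ → (EuclideanSpace ℝ (Fin d) → ℝ) → (EuclideanSpace ℝ (Fin d) → ℝ))
    (u : EuclideanSpace ℝ (Fin d) → ℝ) (M m κ β lam : ℝ)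
    (hM : 0 < M) (hm : 0 ≤ m) (hκ : 0 < κ) (hβ : β ∈ Set.Ico (0:ℝ) 1) (hlam : m < lam)
    (hu_meas : Measurable u) (hu_bdd : ∃ c, ∀ x, |u x| ≤ c)
    (hsem : ∀ s > (0:ℝ), ∀ t > (0:ℝ), ∀ v : EuclideanSpace ℝ (Fin d) → ℝ,
      P (s + t) v = P t (P s v))
    (hpos : ∀ t > (0:ℝ), ∀ v : EuclideanSpace ℝ (Fin d) → ℝ,
      (∀ x, 0 ≤ v x) → ∀ x, 0 ≤ P t v x)
    (hcontr : ∀ t > (0:ℝ), ∀ v : EuclideanSpace ℝ (Fin d) → ℝ, ∀ c : ℝ,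
      (∀ x, |v x| ≤ c) → ∀ x, |P t v x| ≤ c)
    (hscont : ∀ x, ContinuousOn (fun t => P t u x) (Set.Ioi 0))
    (hPcont : ∀ t > (0:ℝ), Continuous (P t u))
    (hreg : ∀ t > (0:ℝ),
      (∀ x, |P t u x| ≤ M * Real.exp (m * t) * t ^ (-β) * ⨆ x', |u x'|) ∧
      (∀ (x h : EuclideanSpace ℝ (Fin d)), 0 < ‖h‖ → ‖h‖ ≤ 1 →
        |(diffOp h)^[Nat.floor κ + 1] (P t u) x| ≤
          M * Real.exp (m * t) * t ^ (-β) * (⨆ x', |u x'|) * ‖h‖ ^ κ)) :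
    Continuous (fun x => ∫ t in Set.Ioi (0:ℝ), Real.exp (-lam * t) * P t u x) ∧
    (∀ x, |∫ t in Set.Ioi (0:ℝ), Real.exp (-lam * t) * P t u x| ≤
      (⨆ x', |u x'|) * ((lam - m)⁻¹ + (1 - β)⁻¹) * (M + 1)) ∧
    (∀ (x h : EuclideanSpace ℝ (Fin d)), 0 < ‖h‖ → ‖h‖ ≤ 1 →
      |(diffOp h)^[Nat.floor κ + 1]
          (fun x' => ∫ t in Set.Ioi (0:ℝ), Real.exp (-lam * t) * P t u x') x| ≤
        (⨆ x', |u x'|) * ((lam - m)⁻¹ + (1 - β)⁻¹) * (M + 1) * ‖h‖ ^ κ) :=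
  stmt_12_general d P u M m κ β lam hβ hlam hscont hPcont hreg
end
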